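/- arXiv:2209.02808 — 2 statements merged into one kernel-verified Lean document; each statement's English description precedes it below -/
import Mathlib

section
/- For every n ≥ 1, the phase-flipped GHZ state is an eigenvector of the MABK operator with eigenvalue −2^(n−1): M_n.mulVec GHZ'_n = (−2^(n−1) : ℂ) • GHZ'_n. -/
open Matrix BigOperators

noncomputable section

/-- Pauli X matrix. -/
def pauliX : Matrix (Fin 2) (Fin 2) ℂ := !![0, 1; 1, 0]

/-- Pauli Y matrix. -/
def pauliY : Matrix (Fin 2) (Fin 2) ℂ := !![0, -Complex.I; Complex.I, 0]

/-- n-fold tensor (Kronecker) product of a family of 2×2 matrices,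
defined entrywise by `T(A) f g = ∏ j, (A j) (f j) (g j)`. -/
def tensor {n : ℕ} (A : Fin n → Matrix (Fin 2) (Fin 2) ℂ) :
    Matrix (Fin n → Fin 2) (Fin n → Fin 2) ℂ :=
  Matrix.of fun f g => ∏ j, A j (f j) (g j)

/-- The n-partite MABK operator
`M_n = (1/(2i)) (⊗ⱼ (X + iY) − ⊗ⱼ (X − iY))`. -/
def MABK (n : ℕ) : Matrix (Fin n → Fin 2) (Fin n → Fin 2) ℂ :=
  (1 / (2 * Complex.I)) •
    (tensor (fun _ : Fin n => pauliX + Complex.I • pauliY)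
      - tensor (fun _ : Fin n => pauliX - Complex.I • pauliY))

/-- The n-qubit GHZ state `(|0…0⟩ + i|1…1⟩)/√2`. -/
def GHZ (n : ℕ) : (Fin n → Fin 2) → ℂ :=
  fun f =>
    if f = fun _ => 0 then 1 / (Real.sqrt 2 : ℂ)
    else if f = fun _ => 1 then Complex.I / (Real.sqrt 2 : ℂ)
    else 0

/-- The phase-flipped n-qubit GHZ state `(|0…0⟩ − i|1…1⟩)/√2`. -/
def GHZ' (n : ℕ) : (Fin n → Fin 2) → ℂ :=
  fun f =>
    if f = fun _ => 0 then 1 / (Real.sqrt 2 : ℂ)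
    else if f = fun _ => 1 then -Complex.I / (Real.sqrt 2 : ℂ)
    else 0

/-! `X + iY = 2|0⟩⟨1|` and `X - iY = 2|1⟩⟨0|`, and a tensor product of matrix units is a matrix unit,
so `M_n = (2ⁿ / 2i) (|0…0⟩⟨1…1| - |1…1⟩⟨0…0|)`. It therefore acts only on the span of `|0…0⟩` and
`|1…1⟩` (distinct once `n ≥ 1`), where the eigenvalue equation is a two-line computation. -/

lemma pauliX_add_I_smul_pauliY : pauliX + Complex.I • pauliY = single 0 1 2 := by
  ext a b
  fin_cases a <;> fin_cases b <;> simp [pauliX, pauliY, one_add_one_eq_two]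

lemma pauliX_sub_I_smul_pauliY : pauliX - Complex.I • pauliY = single 1 0 2 := by
  ext a b
  fin_cases a <;> fin_cases b <;> simp [pauliX, pauliY, one_add_one_eq_two]

lemma tensor_single {n : ℕ} (a b : Fin n → Fin 2) (c : Fin n → ℂ) :
    tensor (fun j => single (a j) (b j) (c j)) = single a b (∏ j, c j) := by
  ext f g
  simp only [tensor, of_apply, single_apply, Finset.prod_ite_zero, Finset.mem_univ, forall_const,
    forall_and, funext_iff]

lemma MABK_eq_smul_single_sub_single (n : ℕ) :
    MABK n = (1 / (2 * Complex.I)) •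
      (single (fun _ => 0) (fun _ => 1) (2 ^ n) - single (fun _ => 1) (fun _ => 0) (2 ^ n)) := by
  rw [MABK, pauliX_add_I_smul_pauliY, pauliX_sub_I_smul_pauliY, tensor_single, tensor_single]
  simp

lemma MABK_mulVec (n : ℕ) (v : (Fin n → Fin 2) → ℂ) :
    MABK n *ᵥ v = (2 ^ n / (2 * Complex.I)) •
      (Pi.single (fun _ => 0) (v fun _ => 1) - Pi.single (fun _ => 1) (v fun _ => 0)) := by
  rw [MABK_eq_smul_single_sub_single, smul_mulVec, sub_mulVec, single_mulVec_eq, single_mulVec_eq]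
  ext f
  simp only [Pi.smul_apply, Pi.sub_apply, Pi.single_apply, smul_eq_mul]
  split_ifs <;> ring

/-- The phase-flipped GHZ state is an eigenvector of the MABK operator
with eigenvalue −2^(n−1). -/
theorem mabk_ghz'_eigen (n : ℕ) (hn : 1 ≤ n) :
    (MABK n).mulVec (GHZ' n) = (-(2 ^ (n - 1)) : ℂ) • GHZ' n := by
  obtain ⟨m, rfl⟩ := Nat.exists_eq_add_of_le' hn
  have hne : (fun _ => 0 : Fin (m + 1) → Fin 2) ≠ fun _ => 1 := fun h => by
    simpa using congrFun h 0
  funext f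
  rw [MABK_mulVec, Nat.add_sub_cancel]
  by_cases h0 : f = fun _ => 0
  · subst h0
    simp only [GHZ', Pi.smul_apply, Pi.sub_apply, Pi.single_apply, if_neg hne, if_neg hne.symm,
      if_pos, smul_eq_mul]
    field_simp
    ring
  by_cases h1 : f = fun _ => 1
  · subst h1
    simp only [GHZ', Pi.smul_apply, Pi.sub_apply, Pi.single_apply, if_neg hne, if_neg hne.symm,
      if_pos, smul_eq_mul]
    field_simp
    linear_combination (-2 * 2 ^ m : ℂ) * Complex.I_sq
  simp [GHZ', h0, h1]
end
end

section
/- ∑_{f,g} conj(GHZ₃ f) · ((∑_{k=1}^{16} Π_k) f g) · (GHZ₃ g) = 4. That is, the three-qubit GHZ state attains the value μ₃ = 4, the quantum maximum (the Lovász number of the associated exclusivity graph), strictly exceeding the noncontextual bound 3. -/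
open Matrix BigOperators

noncomputable section

/-- Projector onto the +1 eigenstate of Pauli X. -/
def Ppx : Matrix (Fin 2) (Fin 2) ℂ := (1 / 2 : ℂ) • (1 + pauliX)

/-- Projector onto the −1 eigenstate of Pauli X. -/
def Pmx : Matrix (Fin 2) (Fin 2) ℂ := (1 / 2 : ℂ) • (1 - pauliX)

/-- Projector onto the +1 eigenstate of Pauli Y. -/
def Ppy : Matrix (Fin 2) (Fin 2) ℂ := (1 / 2 : ℂ) • (1 + pauliY)

/-- Projector onto the −1 eigenstate of Pauli Y. -/
def Pmy : Matrix (Fin 2) (Fin 2) ℂ := (1 / 2 : ℂ) • (1 - pauliY)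

/-- The sixteen rank-one projectors Π₁,…,Π₁₆ of the contextuality witness μ₃
(indexed by `Fin 16`, so `Proj3 k` is Π_{k+1}). -/
def Proj3 : Fin 16 → Matrix (Fin 3 → Fin 2) (Fin 3 → Fin 2) ℂ :=
  ![tensor ![Pmy, Ppy, Ppy], tensor ![Pmy, Pmy, Pmy],
    tensor ![Ppy, Ppy, Pmy], tensor ![Ppy, Pmy, Ppy],
    tensor ![Ppy, Ppx, Ppx], tensor ![Ppy, Pmx, Pmx],
    tensor ![Pmy, Ppx, Pmx], tensor ![Pmy, Pmx, Ppx],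
    tensor ![Pmx, Ppy, Pmx], tensor ![Pmx, Pmy, Ppx],
    tensor ![Ppx, Ppy, Ppx], tensor ![Ppx, Pmy, Pmx],
    tensor ![Ppx, Ppx, Ppy], tensor ![Ppx, Pmx, Pmy],
    tensor ![Pmx, Ppx, Pmy], tensor ![Pmx, Pmx, Ppy]]

/-!
Only the corner entries of an operator `M` at `|0…0⟩` and `|1…1⟩` enter its expectation in the
GHZ state `(|0…0⟩ + i|1…1⟩)/√2`, which is `(M₀₀ + i M₀₁ - i M₁₀ + M₁₁)/2`. For
`Πₖ = ⊗ⱼ (1 + sⱼ Pⱼ)/2` both diagonal corners are `1/8`, and the sign triples are chosen so that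
the off-diagonal corners are `∓i/8` (equivalently, the GHZ state is a `+1` eigenvector of
`s₁s₂s₃ P₁P₂P₃`). So every `Πₖ` has expectation `1/4`, and the sixteen add up to `4`.
-/

open Complex

lemma sum_sum_conj_mul_sum_mul {ι κ : Type*} [Fintype ι] (ψ : ι → ℂ) (s : Finset κ)
    (M : κ → Matrix ι ι ℂ) :
    ∑ f, ∑ g, (starRingEnd ℂ) (ψ f) * (∑ k ∈ s, M k : Matrix ι ι ℂ) f g * ψ g =
      ∑ k ∈ s, ∑ f, ∑ g, (starRingEnd ℂ) (ψ f) * M k f g * ψ g := by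
  simp only [Matrix.sum_apply, Finset.mul_sum, Finset.sum_mul]
  exact (Finset.sum_congr rfl fun f _ => Finset.sum_comm).trans Finset.sum_comm

lemma sum_sum_conj_mul_mul_of_support_pair {ι : Type*} [Fintype ι] {ψ : ι → ℂ} {a b : ι}
    (hab : a ≠ b) (hψ : ∀ x, x ≠ a ∧ x ≠ b → ψ x = 0) (M : Matrix ι ι ℂ) :
    ∑ f, ∑ g, (starRingEnd ℂ) (ψ f) * M f g * ψ g =
      (starRingEnd ℂ) (ψ a) * (M a a * ψ a + M a b * ψ b) +
        (starRingEnd ℂ) (ψ b) * (M b a * ψ a + M b b * ψ b) := by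
  have hpair : ∀ F : ι → ℂ, (∀ x, x ≠ a ∧ x ≠ b → F x = 0) → ∑ x, F x = F a + F b :=
    fun F hF => Fintype.sum_eq_add a b hab hF
  simp_rw [mul_assoc, ← Finset.mul_sum]
  rw [hpair _ fun f hf => by simp [hψ f hf]]
  rw [hpair _ fun g hg => by simp [hψ g hg], hpair _ fun g hg => by simp [hψ g hg]]

section GHZ

variable {n : ℕ}

lemma GHZ_const_zero : GHZ n (fun _ => 0) = 1 / (Real.sqrt 2 : ℂ) := by
  simp [GHZ]

lemma const_zero_ne_const_one (hn : n ≠ 0) : (fun _ : Fin n => (0 : Fin 2)) ≠ fun _ => 1 := by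
  intro h
  simpa using congrFun h ⟨0, Nat.pos_of_ne_zero hn⟩

lemma GHZ_const_one (hn : n ≠ 0) : GHZ n (fun _ => 1) = I / (Real.sqrt 2 : ℂ) := by
  simp [GHZ, (const_zero_ne_const_one hn).symm]

lemma GHZ_eq_zero {f : Fin n → Fin 2} (h₀ : f ≠ fun _ => 0) (h₁ : f ≠ fun _ => 1) :
    GHZ n f = 0 := by
  simp [GHZ, h₀, h₁]

theorem GHZ_expectation (hn : n ≠ 0) (M : Matrix (Fin n → Fin 2) (Fin n → Fin 2) ℂ) :
    ∑ f, ∑ g, (starRingEnd ℂ) (GHZ n f) * M f g * GHZ n g =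
      (M (fun _ => 0) (fun _ => 0) + I * M (fun _ => 0) (fun _ => 1)
        - I * M (fun _ => 1) (fun _ => 0) + M (fun _ => 1) (fun _ => 1)) / 2 := by
  rw [sum_sum_conj_mul_mul_of_support_pair (const_zero_ne_const_one hn)
    (fun f hf => GHZ_eq_zero hf.1 hf.2), GHZ_const_zero, GHZ_const_one hn]
  have hsq : ((Real.sqrt 2 : ℝ) : ℂ) ^ 2 = 2 := by
    rw [← ofReal_pow, Real.sq_sqrt zero_le_two]; norm_num
  simp only [map_div₀, map_one, conj_I, conj_ofReal]
  field_simp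
  rw [hsq]
  linear_combination (-2 * M (fun _ => 1) (fun _ => 1)) * I_mul_I

end GHZ

lemma Ppx_eq : Ppx = !![1 / 2, 1 / 2; 1 / 2, 1 / 2] := by
  ext i j; fin_cases i <;> fin_cases j <;> simp [Ppx, pauliX]

lemma Pmx_eq : Pmx = !![1 / 2, -1 / 2; -1 / 2, 1 / 2] := by
  ext i j; fin_cases i <;> fin_cases j <;> simp [Pmx, pauliX] <;> ring

lemma Ppy_eq : Ppy = !![1 / 2, -I / 2; I / 2, 1 / 2] := by
  ext i j; fin_cases i <;> fin_cases j <;> simp [Ppy, pauliY] <;> ring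

lemma Pmy_eq : Pmy = !![1 / 2, I / 2; -I / 2, 1 / 2] := by
  ext i j; fin_cases i <;> fin_cases j <;> simp [Pmy, pauliY] <;> ring

lemma tensor_apply_const {n : ℕ} (A : Fin n → Matrix (Fin 2) (Fin 2) ℂ) (a b : Fin 2) :
    tensor A (fun _ => a) (fun _ => b) = ∏ j, A j a b :=
  rfl

lemma GHZ_expectation_Proj3 (k : Fin 16) :
    ∑ f, ∑ g, (starRingEnd ℂ) (GHZ 3 f) * Proj3 k f g * GHZ 3 g = 1 / 4 := by
  rw [GHZ_expectation three_ne_zero]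
  fin_cases k <;>
    simp only [Proj3, Fin.reduceFinMk, cons_val, tensor_apply_const, Fin.prod_univ_three,
      Ppx_eq, Pmx_eq, Ppy_eq, Pmy_eq, of_apply]
  all_goals (ring_nf; simp only [I_sq, I_pow_four]; ring)

/-- The three-qubit GHZ state attains the quantum maximum μ₃ = 4
(the Lovász number of the exclusivity graph) of the contextuality witness:
⟨GHZ₃| (∑ₖ Πₖ) |GHZ₃⟩ = 4. -/
theorem ghz_attains_mu3_max :
    ∑ f, ∑ g, (starRingEnd ℂ) (GHZ 3 f) * ((∑ k : Fin 16, Proj3 k) f g) * GHZ 3 g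
      = 4 := by
  rw [sum_sum_conj_mul_sum_mul]
  simp only [GHZ_expectation_Proj3, Finset.sum_const, Finset.card_univ, Fintype.card_fin]
  norm_num
end
end
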